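/- arXiv:2509.02840 — 4 statements merged into one kernel-verified Lean document; each statement's English description precedes it below -/
import Mathlib

section
/- Let y₁, ..., y_k ∈ ℝ^m be unit vectors with associated Householder reflectors H_i = I − 2 y_i y_iᵀ. Let Y_k = [y₁ ... y_k] and let T_k be the upper triangular k×k matrix with (T_k)_{ii} = 1, (T_k)_{ij} = 2 y_iᵀ y_j for i < j, and 0 otherwise. If T_k is invertible, then H₁ H₂ ⋯ H_k = I − 2 Y_k T_k^{-1} Y_kᵀ. -/
/-!
With `P j = H₁ ⋯ H_j`, the telescoping sum of `P j - P (j - 1) = -2 (P (j - 1) y_j) y_jᵀ` gives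
`P k = I - 2 W Yᵀ`, where `W` has columns `w_j = P (j - 1) y_j`. Applying the same expansion of
`P (j - 1)` to `y_j` gives `y_j = w_j + 2 ∑_{i < j} (y_iᵀ y_j) w_i`, which says `W T = Y`; hence
`W = Y T⁻¹`.
-/

open Matrix

theorem Fin.partialProd_eq_one_add_sum {A : Type*} [Ring A] {k : ℕ} (f : Fin k → A)
    (j : Fin (k + 1)) :
    partialProd f j = 1 + ∑ i with i.castSucc < j, partialProd f i.castSucc * (f i - 1) := by
  induction j using Fin.induction with
  | zero => simp
  | succ j ih =>
    have hfilter : Finset.univ.filter (fun i : Fin k => i.castSucc < j.succ) =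
        insert j (Finset.univ.filter fun i => i.castSucc < j.castSucc) := by
      ext i
      simp [le_iff_lt_or_eq, or_comm]
    rw [partialProd_succ, hfilter, Finset.sum_insert (by simp), ih]
    noncomm_ring

theorem Fin.partialProd_last {M : Type*} [Monoid M] {k : ℕ} (f : Fin k → M) :
    partialProd f (last k) = (List.ofFn f).prod := by
  rw [partialProd, val_last, List.take_of_length_le List.length_ofFn.le]

theorem Matrix.transpose_of_mul_of {R l m n : Type*} [CommSemiring R] [Fintype l]
    (u : l → m → R) (v : l → n → R) :
    (of u)ᵀ * of v = ∑ i, vecMulVec (u i) (v i) := by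
  ext a b
  simp [mul_apply, Matrix.sum_apply, vecMulVec_apply]

namespace CompactWY

variable {R n : Type*} [CommRing R] [Fintype n] [DecidableEq n] {k : ℕ}

def reflector (τ : R) (v : n → R) : Matrix n n R :=
  1 - τ • vecMulVec v v

/-- The `i`-th column `H₀ ⋯ H_{i-1} yᵢ` of the factor `W = Y T⁻¹`. -/
def wColumn (τ : R) (y : Fin k → n → R) (i : Fin k) : n → R :=
  Fin.partialProd (fun l => reflector τ (y l)) i.castSucc *ᵥ y i

theorem partialProd_reflector (τ : R) (y : Fin k → n → R) (j : Fin (k + 1)) :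
    Fin.partialProd (fun l => reflector τ (y l)) j =
      1 - τ • ∑ i with i.castSucc < j, vecMulVec (wColumn τ y i) (y i) := by
  rw [Fin.partialProd_eq_one_add_sum, sub_eq_add_neg, Finset.smul_sum,
    ← Finset.sum_neg_distrib]
  congr 1
  refine Finset.sum_congr rfl fun i _ => ?_
  simp [reflector, wColumn, mul_vecMulVec]

theorem prod_reflector (τ : R) (y : Fin k → n → R) :
    (List.ofFn fun i => reflector τ (y i)).prod = 1 - τ • ((of (wColumn τ y))ᵀ * of y) := by
  rw [← Fin.partialProd_last, partialProd_reflector, transpose_of_mul_of]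
  simp [Fin.castSucc_lt_last]

theorem wColumn_mul {τ : R} {y : Fin k → n → R} {T : Matrix (Fin k) (Fin k) R}
    (hT : ∀ i j, T i j = if i = j then 1 else if i < j then τ * (y i ⬝ᵥ y j) else 0) :
    (of (wColumn τ y))ᵀ * T = (of y)ᵀ := by
  ext a j
  have hcol : y j = wColumn τ y j + τ • ∑ i with i < j, (y i ⬝ᵥ y j) • wColumn τ y i := by
    have hP := partialProd_reflector τ y j.castSucc
    simp only [Fin.castSucc_lt_castSucc_iff] at hP
    calc y j = wColumn τ y j +
          (1 - Fin.partialProd (fun l => reflector τ (y l)) j.castSucc) *ᵥ y j := by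
          simp [wColumn, sub_mulVec]
      _ = _ := by
          rw [hP]
          simp [smul_mulVec, sum_mulVec, vecMulVec_mulVec]
  have hsum : ∑ i, T i j • wColumn τ y i = y j := by
    have hsplit : ∀ i, T i j • wColumn τ y i =
        (if i = j then wColumn τ y i else 0) +
          if i < j then τ • (y i ⬝ᵥ y j) • wColumn τ y i else 0 := by
      intro i
      by_cases h : i = j
      · simp [hT, h]
      · simp [hT, h, mul_smul]
    rw [Finset.sum_congr rfl fun i _ => hsplit i, Finset.sum_add_distrib, Finset.sum_ite_eq',
      if_pos (Finset.mem_univ j), ← Finset.sum_filter, ← Finset.smul_sum]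
    exact hcol.symm
  simpa [mul_apply, Finset.sum_apply, mul_comm] using congrFun hsum a

end CompactWY

theorem compact_WY_representation_general (m k : ℕ)
    (y : Fin k → Fin m → ℝ)
    (H : Fin k → Matrix (Fin m) (Fin m) ℝ)
    (hH : ∀ i, H i = 1 - (2 : ℝ) • Matrix.vecMulVec (y i) (y i))
    (Y : Matrix (Fin m) (Fin k) ℝ)
    (hY : ∀ a i, Y a i = y i a)
    (T : Matrix (Fin k) (Fin k) ℝ)
    (hT : ∀ i j : Fin k,
      T i j = if i = j then 1
        else if i < j then 2 * ∑ a, y i a * y j a else 0)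
    (hTinv : IsUnit T.det) :
    (List.ofFn H).prod = 1 - (2 : ℝ) • (Y * T⁻¹ * Yᵀ) := by
  have hH : H = fun i => CompactWY.reflector 2 (y i) := funext hH
  have hY : Y = (of y)ᵀ := by ext a i; exact hY a i
  rw [hH, CompactWY.prod_reflector,
    ← mul_nonsing_inv_cancel_right _ (of (CompactWY.wColumn 2 y))ᵀ hTinv,
    CompactWY.wColumn_mul hT, hY, transpose_transpose]

/-- Compact WY representation (Walker/Puglisi): the ordered product of
Householder reflectors `H₁ ⋯ H_k` built from unit vectors `y₁,…,y_k` equals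
`I − 2 Y T⁻¹ Yᵀ` where `T` is the upper triangular matrix with unit diagonal
and strictly-upper entries `2 yᵢᵀ yⱼ`. -/
theorem compact_WY_representation (m k : ℕ)
    (y : Fin k → Fin m → ℝ)
    (hunit : ∀ i, ∑ a, (y i a) ^ 2 = 1)
    (H : Fin k → Matrix (Fin m) (Fin m) ℝ)
    (hH : ∀ i, H i = 1 - (2 : ℝ) • Matrix.vecMulVec (y i) (y i))
    (Y : Matrix (Fin m) (Fin k) ℝ)
    (hY : ∀ a i, Y a i = y i a)
    (T : Matrix (Fin k) (Fin k) ℝ)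
    (hT : ∀ i j : Fin k,
      T i j = if i = j then 1
        else if i < j then 2 * ∑ a, y i a * y j a else 0)
    (hTinv : IsUnit T.det) :
    (List.ofFn H).prod = 1 - (2 : ℝ) • (Y * T⁻¹ * Yᵀ) :=
  compact_WY_representation_general m k y H hH Y hY T hT hTinv
end

section
/- With Y_k and T_k as in the compact WY representation (unit columns y_i, T_k upper triangular with unit diagonal and (T_k)_{ij} = 2 y_iᵀ y_j for i < j), the matrix Q_k = I − 2 Y_k T_k^{-1} Y_kᵀ is orthogonal: Q_kᵀ Q_k = I. -/
open Matrix BigOperators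

/-- The compact WY matrix `Q = I − 2 Y T⁻¹ Yᵀ` is orthogonal. -/
theorem compact_WY_orthogonal (m k : ℕ)
    (y : Fin k → Fin m → ℝ)
    (hunit : ∀ i, ∑ a, (y i a) ^ 2 = 1)
    (Y : Matrix (Fin m) (Fin k) ℝ)
    (hY : ∀ a i, Y a i = y i a)
    (T : Matrix (Fin k) (Fin k) ℝ)
    (hT : ∀ i j : Fin k,
      T i j = if i = j then 1
        else if i < j then 2 * ∑ a, y i a * y j a else 0)
    (hTinv : IsUnit T.det)
    (Q : Matrix (Fin m) (Fin m) ℝ)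
    (hQ : Q = 1 - (2 : ℝ) • (Y * T⁻¹ * Yᵀ)) :
    Qᵀ * Q = 1 := by
  -- key identity: Tᵀ + T = 2 • (Yᵀ * Y)
  have hsum : Tᵀ + T = (2 : ℝ) • (Yᵀ * Y) := by
    ext i j
    simp only [Matrix.add_apply, Matrix.transpose_apply, Matrix.smul_apply,
      Matrix.mul_apply, smul_eq_mul]
    rcases lt_trichotomy i j with h | h | h
    · rw [hT i j, hT j i, if_neg h.ne, if_pos h, if_neg h.ne', if_neg (not_lt.mpr h.le)]
      rw [zero_add]
      simp only [hY, Finset.mul_sum]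
    · subst h
      rw [hT i i, if_pos rfl]
      have : ∑ a, 2 * (Y a i * Y a i) = 2 * ∑ a, (y i a) ^ 2 := by
        rw [Finset.mul_sum]; congr 1; ext a; rw [hY]; ring
      rw [Finset.mul_sum, this, hunit]; norm_num
    · rw [hT i j, hT j i, if_neg h.ne', if_neg (not_lt.mpr h.le), if_neg h.ne, if_pos h]
      rw [add_zero]
      simp only [hY, Finset.mul_sum]
      exact Finset.sum_congr rfl fun a _ => by ring
  have h1 : T * T⁻¹ = 1 := Matrix.mul_nonsing_inv T hTinv
  have h2 : Tᵀ⁻¹ * Tᵀ = 1 := by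
    apply Matrix.nonsing_inv_mul
    rw [Matrix.det_transpose]; exact hTinv
  have htr : (T⁻¹)ᵀ = Tᵀ⁻¹ := Matrix.transpose_nonsing_inv T
  have hQT : Qᵀ = 1 - (2 : ℝ) • (Y * Tᵀ⁻¹ * Yᵀ) := by
    rw [hQ]
    simp [Matrix.transpose_smul, Matrix.transpose_mul, htr, Matrix.mul_assoc]
  rw [hQT, hQ]
  have key : (Y * Tᵀ⁻¹ * Yᵀ) * (Y * T⁻¹ * Yᵀ)
      = ((2:ℝ)⁻¹) • (Y * T⁻¹ * Yᵀ) + ((2:ℝ)⁻¹) • (Y * Tᵀ⁻¹ * Yᵀ) := by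
    have e1 : (Y * Tᵀ⁻¹ * Yᵀ) * (Y * T⁻¹ * Yᵀ)
        = ((2:ℝ)⁻¹) • (Y * Tᵀ⁻¹ * (((2:ℝ) • (Yᵀ * Y)) * (T⁻¹ * Yᵀ))) := by
      rw [Matrix.smul_mul, Matrix.mul_smul, smul_smul]
      norm_num
      simp only [Matrix.mul_assoc]
    rw [e1, ← hsum, Matrix.add_mul, Matrix.mul_add, smul_add]
    congr 1
    · have : Y * Tᵀ⁻¹ * (Tᵀ * (T⁻¹ * Yᵀ)) = Y * (Tᵀ⁻¹ * Tᵀ) * (T⁻¹ * Yᵀ) := by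
        simp only [Matrix.mul_assoc]
      rw [this, h2, Matrix.mul_one, ← Matrix.mul_assoc]
    · have : Y * Tᵀ⁻¹ * (T * (T⁻¹ * Yᵀ)) = Y * Tᵀ⁻¹ * ((T * T⁻¹) * Yᵀ) := by
        simp only [Matrix.mul_assoc]
      rw [this, h1, Matrix.one_mul]
  rw [sub_mul, one_mul, Matrix.smul_mul, mul_sub, mul_one, Matrix.mul_smul, key]
  module
end

section
/- Let A = B + b cᵀ with B ∈ ℝ^{m×n}, and let Q_k = I − 2 Y_k T_k^{-1} Y_kᵀ and P_k = I − 2 W_k R_k^{-1} W_kᵀ be compact WY representations of products of k left and k right Householder reflectors. Then Q_kᵀ A P_k = B − [b, Y_k, B W_k] · M^{-1} · [c, Bᵀ Y_k, W_k]ᵀ, where M is the block upper-triangular matrix M = [[−1, 0, cᵀW_k], [Y_kᵀb, ½T_kᵀ, Y_kᵀBW_k], [0, 0, ½R_k]], provided M is invertible. -/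
/-!
Write the rank-one update as `A = B + C Dᵀ`. Expanding the product gives
`Qᵀ A P = A - 2 Y T⁻ᵀ Yᵀ A - 2 A W R⁻¹ Wᵀ + 4 Y T⁻ᵀ Yᵀ A W R⁻¹ Wᵀ`. Block back-substitution
gives `M` an explicit inverse `N` (only `T`, `R` and `2` need to be invertible), and multiplying
out `[C, Y, BW] N [D, BᵀY, W]ᵀ` yields exactly `B - Qᵀ A P`, by a ring identity.
-/

open Matrix

noncomputable section

variable {𝕜 : Type*} {m n p k : Type*} [Fintype m] [Fintype n] [Fintype p] [Fintype k]
  [DecidableEq p] [DecidableEq k]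

section CommRing

variable [CommRing 𝕜] [DecidableEq m] [DecidableEq n]

def compactWY (Y : Matrix m k 𝕜) (T : Matrix k k 𝕜) : Matrix m m 𝕜 :=
  1 - (2 : 𝕜) • (Y * T⁻¹ * Yᵀ)

def wyLowRankMatrixInv (B : Matrix m n 𝕜) (C : Matrix m p 𝕜) (D : Matrix n p 𝕜)
    (Y : Matrix m k 𝕜) (W : Matrix n k 𝕜) (T R : Matrix k k 𝕜) :
    Matrix (p ⊕ (k ⊕ k)) (p ⊕ (k ⊕ k)) 𝕜 :=
  fromBlocks (-1) (fromCols 0 ((2 : 𝕜) • (Dᵀ * W * R⁻¹)))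
    (fromRows ((2 : 𝕜) • (T⁻¹ᵀ * Yᵀ * C)) 0)
    (fromBlocks ((2 : 𝕜) • T⁻¹ᵀ) ((-4 : 𝕜) • (T⁻¹ᵀ * Yᵀ * (B + C * Dᵀ) * W * R⁻¹)) 0
      ((2 : 𝕜) • R⁻¹))

theorem compactWY_transpose_mul_mul_compactWY (B : Matrix m n 𝕜) (C : Matrix m p 𝕜)
    (D : Matrix n p 𝕜) (Y : Matrix m k 𝕜) (W : Matrix n k 𝕜) (T R : Matrix k k 𝕜) :
    (compactWY Y T)ᵀ * (B + C * Dᵀ) * compactWY W R =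
      B - fromCols C (fromCols Y (B * W)) * wyLowRankMatrixInv B C D Y W T R *
        (fromCols D (fromCols (Bᵀ * Y) W))ᵀ := by
  simp only [compactWY, wyLowRankMatrixInv, transpose_fromCols, transpose_sub, transpose_smul,
    transpose_mul, transpose_one, transpose_transpose, fromCols_mul_fromBlocks,
    fromCols_mul_fromRows, mul_fromCols, Matrix.mul_add, Matrix.add_mul, Matrix.sub_mul,
    Matrix.mul_sub, Matrix.mul_one, Matrix.one_mul, Matrix.mul_neg, Matrix.neg_mul,
    Matrix.mul_zero, Matrix.zero_mul, Matrix.smul_mul, Matrix.mul_smul, smul_smul, add_zero,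
    zero_add, Matrix.mul_assoc, smul_add, smul_sub]
  module

end CommRing

section Field

variable [Field 𝕜]

def wyLowRankMatrix (B : Matrix m n 𝕜) (C : Matrix m p 𝕜) (D : Matrix n p 𝕜)
    (Y : Matrix m k 𝕜) (W : Matrix n k 𝕜) (T R : Matrix k k 𝕜) :
    Matrix (p ⊕ (k ⊕ k)) (p ⊕ (k ⊕ k)) 𝕜 :=
  fromBlocks (-1) (fromCols 0 (Dᵀ * W)) (fromRows (Yᵀ * C) 0)
    (fromBlocks ((1 / 2 : 𝕜) • Tᵀ) (Yᵀ * B * W) 0 ((1 / 2 : 𝕜) • R))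

theorem wyLowRankMatrix_mul_wyLowRankMatrixInv (h2 : (2 : 𝕜) ≠ 0) (B : Matrix m n 𝕜)
    (C : Matrix m p 𝕜) (D : Matrix n p 𝕜) (Y : Matrix m k 𝕜) (W : Matrix n k 𝕜)
    {T R : Matrix k k 𝕜} (hT : IsUnit T.det) (hR : IsUnit R.det) :
    wyLowRankMatrix B C D Y W T R * wyLowRankMatrixInv B C D Y W T R = 1 := by
  have hTT : Tᵀ * T⁻¹ᵀ = 1 := by rw [← transpose_mul, nonsing_inv_mul T hT, transpose_one]
  have hRR : R * R⁻¹ = 1 := mul_nonsing_inv R hR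
  rw [wyLowRankMatrix, wyLowRankMatrixInv, fromBlocks_multiply, ← fromBlocks_one,
    fromBlocks_inj]
  simp only [fromCols_mul_fromRows, fromCols_mul_fromBlocks, fromBlocks_mul_fromRows,
    fromRows_mul_fromCols, fromBlocks_multiply]
  refine ⟨by simp, ?_, ?_, ?_⟩
  · ext i (j | j) <;> simp [Matrix.mul_smul, Matrix.mul_assoc]
  · ext (i | i) j <;> simp [Matrix.mul_smul, ← Matrix.mul_assoc, hTT, smul_smul, h2]
  · rw [fromBlocks_add, ← fromBlocks_one, fromBlocks_inj]
    have half_mul_four : (2 : 𝕜)⁻¹ * 4 = 2 := by field_simp; norm_num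
    simp [Matrix.mul_smul, ← Matrix.mul_assoc, hTT, hRR, smul_smul, h2, half_mul_four,
      Matrix.mul_add, Matrix.add_mul]

theorem inv_wyLowRankMatrix (h2 : (2 : 𝕜) ≠ 0) (B : Matrix m n 𝕜) (C : Matrix m p 𝕜)
    (D : Matrix n p 𝕜) (Y : Matrix m k 𝕜) (W : Matrix n k 𝕜) {T R : Matrix k k 𝕜}
    (hT : IsUnit T.det) (hR : IsUnit R.det) :
    (wyLowRankMatrix B C D Y W T R)⁻¹ = wyLowRankMatrixInv B C D Y W T R :=
  inv_eq_right_inv (wyLowRankMatrix_mul_wyLowRankMatrixInv h2 B C D Y W hT hR)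

end Field

end

theorem compact_householder_lowrank_update_general (m n k : ℕ)
    (B : Matrix (Fin m) (Fin n) ℝ) (b : Fin m → ℝ) (c : Fin n → ℝ)
    (Y : Matrix (Fin m) (Fin k) ℝ) (W : Matrix (Fin n) (Fin k) ℝ)
    (T R : Matrix (Fin k) (Fin k) ℝ)
    (hTinv : IsUnit T.det) (hRinv : IsUnit R.det)
    (Q : Matrix (Fin m) (Fin m) ℝ) (P : Matrix (Fin n) (Fin n) ℝ)
    (hQ : Q = 1 - (2 : ℝ) • (Y * T⁻¹ * Yᵀ))
    (hP : P = 1 - (2 : ℝ) • (W * R⁻¹ * Wᵀ))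
    (U : Matrix (Fin m) (Fin 1 ⊕ (Fin k ⊕ Fin k)) ℝ)
    (hU : U = Matrix.fromCols (Matrix.of fun a (_ : Fin 1) => b a)
      (Matrix.fromCols Y (B * W)))
    (V : Matrix (Fin n) (Fin 1 ⊕ (Fin k ⊕ Fin k)) ℝ)
    (hV : V = Matrix.fromCols (Matrix.of fun a (_ : Fin 1) => c a)
      (Matrix.fromCols (Bᵀ * Y) W))
    (M : Matrix (Fin 1 ⊕ (Fin k ⊕ Fin k)) (Fin 1 ⊕ (Fin k ⊕ Fin k)) ℝ)
    (hM : M = Matrix.fromBlocks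
      (-1 : Matrix (Fin 1) (Fin 1) ℝ)
      (Matrix.fromCols (0 : Matrix (Fin 1) (Fin k) ℝ)
        (Matrix.of fun (_ : Fin 1) j => ∑ a, c a * W a j))
      (Matrix.fromRows (Matrix.of fun i (_ : Fin 1) => ∑ a, Y a i * b a)
        (0 : Matrix (Fin k) (Fin 1) ℝ))
      (Matrix.fromBlocks ((1 / 2 : ℝ) • Tᵀ) (Yᵀ * B * W)
        0 ((1 / 2 : ℝ) • R))) :
    Qᵀ * (B + Matrix.vecMulVec b c) * P = B - U * M⁻¹ * Vᵀ := by
  set C : Matrix (Fin m) (Fin 1) ℝ := of fun a _ => b a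
  set D : Matrix (Fin n) (Fin 1) ℝ := of fun a _ => c a
  have hCD : vecMulVec b c = C * Dᵀ := by
    ext
    simp [C, D, vecMulVec, mul_apply]
  have hDW : (of fun (_ : Fin 1) j => ∑ a, c a * W a j) = Dᵀ * W := by
    ext
    simp [D, mul_apply]
  have hYC : (of fun i (_ : Fin 1) => ∑ a, Y a i * b a) = Yᵀ * C := by
    ext
    simp [C, mul_apply]
  rw [hDW, hYC] at hM
  rw [hQ, hP, hU, hV, hM, ← wyLowRankMatrix,
    inv_wyLowRankMatrix two_ne_zero B C D Y W hTinv hRinv, hCD]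
  exact compactWY_transpose_mul_mul_compactWY B C D Y W T R

/-- Theorem 2.1 of the paper: applying `k` left and `k` right Householder
reflectors in compact WY form to `A = B + b cᵀ` yields
`Qᵀ A P = B − [b, Y, BW] M⁻¹ [c, BᵀY, W]ᵀ` with the block matrix
`M = [[−1, 0, cᵀW], [Yᵀb, ½Tᵀ, YᵀBW], [0, 0, ½R]]`. -/
theorem compact_householder_lowrank_update (m n k : ℕ)
    (B : Matrix (Fin m) (Fin n) ℝ) (b : Fin m → ℝ) (c : Fin n → ℝ)
    (Y : Matrix (Fin m) (Fin k) ℝ) (W : Matrix (Fin n) (Fin k) ℝ)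
    (hYunit : ∀ i : Fin k, ∑ a, (Y a i) ^ 2 = 1)
    (hWunit : ∀ i : Fin k, ∑ a, (W a i) ^ 2 = 1)
    (T R : Matrix (Fin k) (Fin k) ℝ)
    (hT : ∀ i j : Fin k, T i j = if i = j then 1
      else if i < j then 2 * ∑ a, Y a i * Y a j else 0)
    (hR : ∀ i j : Fin k, R i j = if i = j then 1
      else if i < j then 2 * ∑ a, W a i * W a j else 0)
    (hTinv : IsUnit T.det) (hRinv : IsUnit R.det)
    (Q : Matrix (Fin m) (Fin m) ℝ) (P : Matrix (Fin n) (Fin n) ℝ)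
    (hQ : Q = 1 - (2 : ℝ) • (Y * T⁻¹ * Yᵀ))
    (hP : P = 1 - (2 : ℝ) • (W * R⁻¹ * Wᵀ))
    (U : Matrix (Fin m) (Fin 1 ⊕ (Fin k ⊕ Fin k)) ℝ)
    (hU : U = Matrix.fromCols (Matrix.of fun a (_ : Fin 1) => b a)
      (Matrix.fromCols Y (B * W)))
    (V : Matrix (Fin n) (Fin 1 ⊕ (Fin k ⊕ Fin k)) ℝ)
    (hV : V = Matrix.fromCols (Matrix.of fun a (_ : Fin 1) => c a)
      (Matrix.fromCols (Bᵀ * Y) W))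
    (M : Matrix (Fin 1 ⊕ (Fin k ⊕ Fin k)) (Fin 1 ⊕ (Fin k ⊕ Fin k)) ℝ)
    (hM : M = Matrix.fromBlocks
      (-1 : Matrix (Fin 1) (Fin 1) ℝ)
      (Matrix.fromCols (0 : Matrix (Fin 1) (Fin k) ℝ)
        (Matrix.of fun (_ : Fin 1) j => ∑ a, c a * W a j))
      (Matrix.fromRows (Matrix.of fun i (_ : Fin 1) => ∑ a, Y a i * b a)
        (0 : Matrix (Fin k) (Fin 1) ℝ))
      (Matrix.fromBlocks ((1 / 2 : ℝ) • Tᵀ) (Yᵀ * B * W)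
        0 ((1 / 2 : ℝ) • R)))
    (hMinv : IsUnit M.det) :
    Qᵀ * (B + Matrix.vecMulVec b c) * P = B - U * M⁻¹ * Vᵀ :=
  compact_householder_lowrank_update_general m n k B b c Y W T R hTinv hRinv Q P hQ hP U hU V hV M
    hM
end

section
/- With Q ∈ ℝ^{m×r}, P ∈ ℝ^{n×r} having orthonormal columns, B ∈ ℝ^{r×r}, b ∈ ℝ^m, c ∈ ℝ^n, and b̃ = Qᵀb, b⊥ = b − Qb̃, δ = ‖b⊥‖ > 0, c̃ = Pᵀc, c⊥ = c − Pc̃, γ = ‖c⊥‖ > 0, the rank-one update satisfies Q B Pᵀ + b cᵀ = [Q, b⊥/δ] · ( [[B, 0],[0, 0]] + [b̃; δ]·[c̃ᵀ, γ] ) · [P, c⊥/γ]ᵀ. -/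
/-!
The block `diag(B, 0)` only meets the first column blocks of `[Q, b⊥/δ]` and `[P, c⊥/γ]`, giving
`Q B Pᵀ`, while the rank-one part factors as `([Q, b⊥/δ] [b̃; δ]) ([P, c⊥/γ] [c̃; γ])ᵀ`, and
`[Q, b⊥/δ] [b̃; δ] = Q b̃ + b⊥ = b` (likewise for `c`).
-/

open Matrix

namespace Matrix

variable {R m n k₁ k₂ l₁ l₂ : Type*}

lemma fromCols_mul_fromBlocks_zero_mul_fromRows [Semiring R] [Fintype k₁] [Fintype k₂]
    [Fintype l₁] [Fintype l₂] (A₁ : Matrix m k₁ R) (A₂ : Matrix m k₂ R) (B : Matrix k₁ l₁ R)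
    (C₁ : Matrix l₁ n R) (C₂ : Matrix l₂ n R) :
    fromCols A₁ A₂ * (fromBlocks B 0 0 0 : Matrix (k₁ ⊕ k₂) (l₁ ⊕ l₂) R) * fromRows C₁ C₂ =
      A₁ * B * C₁ := by
  rw [fromCols_mul_fromBlocks, fromCols_mul_fromRows]
  simp

lemma fromCols_div_mulVec_sumElim [DivisionRing R] [Fintype k₁] [Fintype k₂] [Unique k₂]
    (A : Matrix m k₁ R) (v : m → R) (x : k₁ → R) {d : R} (hd : d ≠ 0) :
    fromCols A (of fun i (_ : k₂) => v i / d) *ᵥ Sum.elim x (fun _ => d) = A *ᵥ x + v := by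
  ext i
  simp [mulVec, dotProduct, div_mul_cancel₀ _ hd]

end Matrix

theorem rank_one_update_augmented_factorization_general (m n r : ℕ)
    (Q : Matrix (Fin m) (Fin r) ℝ)
    (P : Matrix (Fin n) (Fin r) ℝ)
    (B : Matrix (Fin r) (Fin r) ℝ)
    (b : Fin m → ℝ) (c : Fin n → ℝ)
    (btil : Fin r → ℝ)
    (bperp : Fin m → ℝ) (hbperp : bperp = b - Q.mulVec btil)
    (δ : ℝ) (hδpos : 0 < δ)
    (ctil : Fin r → ℝ)
    (cperp : Fin n → ℝ) (hcperp : cperp = c - P.mulVec ctil)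
    (γ : ℝ) (hγpos : 0 < γ)
    (Qbar : Matrix (Fin m) (Fin r ⊕ Fin 1) ℝ)
    (hQbar : Qbar = Matrix.fromCols Q (Matrix.of fun a (_ : Fin 1) => bperp a / δ))
    (Pbar : Matrix (Fin n) (Fin r ⊕ Fin 1) ℝ)
    (hPbar : Pbar = Matrix.fromCols P (Matrix.of fun a (_ : Fin 1) => cperp a / γ))
    (Mid : Matrix (Fin r ⊕ Fin 1) (Fin r ⊕ Fin 1) ℝ)
    (hMid : Mid = Matrix.fromBlocks B 0 0 0 +
      Matrix.vecMulVec (Sum.elim btil (fun _ => δ)) (Sum.elim ctil (fun _ => γ))) :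
    Q * B * Pᵀ + Matrix.vecMulVec b c = Qbar * Mid * Pbarᵀ := by
  subst hQbar hPbar hMid
  rw [Matrix.mul_add, Matrix.add_mul, transpose_fromCols, fromCols_mul_fromBlocks_zero_mul_fromRows,
    ← transpose_fromCols, mul_vecMulVec, vecMulVec_mul, vecMul_transpose,
    fromCols_div_mulVec_sumElim Q bperp btil hδpos.ne',
    fromCols_div_mulVec_sumElim P cperp ctil hγpos.ne',
    hbperp, hcperp, add_sub_cancel, add_sub_cancel]

/-- Rank-one subspace update factorization:
`Q B Pᵀ + b cᵀ = [Q, b⊥/δ] ( [[B,0],[0,0]] + [b̃; δ][c̃ᵀ, γ] ) [P, c⊥/γ]ᵀ`. -/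
theorem rank_one_update_augmented_factorization (m n r : ℕ)
    (Q : Matrix (Fin m) (Fin r) ℝ) (hQ : Qᵀ * Q = 1)
    (P : Matrix (Fin n) (Fin r) ℝ) (hP : Pᵀ * P = 1)
    (B : Matrix (Fin r) (Fin r) ℝ)
    (b : Fin m → ℝ) (c : Fin n → ℝ)
    (btil : Fin r → ℝ) (hbtil : btil = Qᵀ.mulVec b)
    (bperp : Fin m → ℝ) (hbperp : bperp = b - Q.mulVec btil)
    (δ : ℝ) (hδ : δ = Real.sqrt (∑ a, (bperp a) ^ 2)) (hδpos : 0 < δ)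
    (ctil : Fin r → ℝ) (hctil : ctil = Pᵀ.mulVec c)
    (cperp : Fin n → ℝ) (hcperp : cperp = c - P.mulVec ctil)
    (γ : ℝ) (hγ : γ = Real.sqrt (∑ a, (cperp a) ^ 2)) (hγpos : 0 < γ)
    (Qbar : Matrix (Fin m) (Fin r ⊕ Fin 1) ℝ)
    (hQbar : Qbar = Matrix.fromCols Q (Matrix.of fun a (_ : Fin 1) => bperp a / δ))
    (Pbar : Matrix (Fin n) (Fin r ⊕ Fin 1) ℝ)
    (hPbar : Pbar = Matrix.fromCols P (Matrix.of fun a (_ : Fin 1) => cperp a / γ))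
    (Mid : Matrix (Fin r ⊕ Fin 1) (Fin r ⊕ Fin 1) ℝ)
    (hMid : Mid = Matrix.fromBlocks B 0 0 0 +
      Matrix.vecMulVec (Sum.elim btil (fun _ => δ)) (Sum.elim ctil (fun _ => γ))) :
    Q * B * Pᵀ + Matrix.vecMulVec b c = Qbar * Mid * Pbarᵀ :=
  rank_one_update_augmented_factorization_general m n r Q P B b c btil bperp hbperp δ hδpos ctil
    cperp hcperp γ hγpos Qbar hQbar Pbar hPbar Mid hMid
end
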